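/- arXiv:1907.01524 — 2 statements merged into one kernel-verified Lean document; each statement's English description precedes it below -/
import Mathlib

section
/- Let χ₁, χ₂ be primitive Dirichlet characters of conductors q₁, q₂ respectively, with q₁, q₂ > 1 and χ₁(−1)χ₂(−1) = 1, and let ψ = χ₁·conj(χ₂). Then for every integer n ≥ 1 and every z in the upper half-plane ℍ, ∑_{d | n, d ≥ 1} ψ(n/d) · ∑_{b=0}^{d−1} f_{χ₁,χ₂}( ((n/d)·z + b)/d ) = ( ∑_{d | n, d ≥ 1} χ₁(n/d)·conj(χ₂)(d)·d ) · f_{χ₁,χ₂}(z). -/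
open Complex

/-- `e(w) = exp(2πiw)`. -/
noncomputable def eC (w : ℂ) : ℂ := Complex.exp (2 * Real.pi * Complex.I * w)

/-- The holomorphic part `f_{χ₁,χ₂}(z) = ∑_{l≥1} ∑_{k≥1} (χ₁(l) conj(χ₂)(k) / l) e(klz)`. -/
noncomputable def fE {q₁ q₂ : ℕ} (χ₁ : DirichletCharacter ℂ q₁)
    (χ₂ : DirichletCharacter ℂ q₂) (z : ℂ) : ℂ :=
  ∑' l : ℕ+, ∑' k : ℕ+,
    χ₁ ((l : ℕ) : ZMod q₁) * (starRingEnd ℂ) (χ₂ ((k : ℕ) : ZMod q₂)) / (l : ℂ)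
      * eC ((k : ℂ) * (l : ℂ) * z)

/-- The Gauss sum `τ(χ) = ∑_{n mod q} χ(n) e(n/q)`. -/
noncomputable def gaussSum' {q : ℕ} (χ : DirichletCharacter ℂ q) : ℂ :=
  ∑ n ∈ Finset.range q, χ ((n : ℕ) : ZMod q) * eC ((n : ℂ) / (q : ℂ))

/-- The first Bernoulli function, `B₁(x) = x - ⌊x⌋ - 1/2` off ℤ, and `0` on ℤ. -/
noncomputable def B1 (x : ℝ) : ℝ := if Int.fract x = 0 then 0 else Int.fract x - 1 / 2

/-! ### auxiliary lemmas -/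

lemma eC_add (a b : ℂ) : eC (a + b) = eC a * eC b := by
  simp [eC, mul_add, Complex.exp_add]

lemma eC_nat (m : ℕ) : eC (m : ℂ) = 1 := by
  have := Complex.exp_int_mul_two_pi_mul_I (m : ℤ)
  rw [eC, ← this]; push_cast; ring_nf

lemma eC_pow (w : ℂ) (b : ℕ) : eC w ^ b = eC (b * w) := by
  rw [eC, eC, ← Complex.exp_nat_mul]; ring_nf

lemma norm_eC (w : ℂ) : ‖eC w‖ = Real.exp (-(2 * Real.pi * w.im)) := by
  rw [eC, Complex.norm_exp]
  congr 1
  simp [Complex.mul_re, Complex.mul_im]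

lemma sum_eC_eq (d m : ℕ) (hd : 0 < d) :
    ∑ b ∈ Finset.range d, eC ((m : ℂ) * b / d) = if d ∣ m then (d : ℂ) else 0 := by
  have hdC : (d : ℂ) ≠ 0 := Nat.cast_ne_zero.mpr hd.ne'
  have hterm : ∀ b : ℕ, eC ((m : ℂ) * b / d) = eC ((m : ℂ) / d) ^ b := by
    intro b; rw [eC_pow]; congr 1; ring
  simp_rw [hterm]
  have hzeta : eC ((m : ℂ) / d) = 1 ↔ d ∣ m := by
    constructor
    · intro h
      rw [eC, Complex.exp_eq_one_iff] at h
      obtain ⟨t, ht⟩ := h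
      have h2 : (2 * (Real.pi : ℂ) * Complex.I) ≠ 0 := by
        simpa [mul_comm] using Complex.two_pi_I_ne_zero
      have hmd : (m : ℂ) / d = t := by
        have : (2 * (Real.pi : ℂ) * Complex.I) * ((m : ℂ) / d)
            = (2 * (Real.pi : ℂ) * Complex.I) * t := by rw [ht]; ring
        exact mul_left_cancel₀ h2 this
      have hm : (m : ℂ) = t * d := by
        field_simp at hmd; linear_combination hmd
      have hZ : (m : ℤ) = t * d := by exact_mod_cast hm
      have : (d : ℤ) ∣ (m : ℤ) := ⟨t, by linarith⟩
      exact_mod_cast this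
    · rintro ⟨e, rfl⟩
      have : ((d * e : ℕ) : ℂ) / d = (e : ℕ) := by push_cast; field_simp
      rw [this, eC_nat]
  by_cases h : d ∣ m
  · rw [hzeta.mpr h]; simp [h]
  · have hz : eC ((m : ℂ) / d) ≠ 1 := fun hh => h (hzeta.mp hh)
    rw [geom_sum_eq hz]
    have hpow : eC ((m : ℂ) / d) ^ d = 1 := by
      rw [eC_pow]
      have : (d : ℂ) * ((m : ℂ) / d) = (m : ℂ) := by field_simp
      rw [this, eC_nat]
    simp [h, hpow]

lemma summable_pnat_geo {r : ℝ} (h0 : 0 ≤ r) (h1 : r < 1) :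
    Summable (fun l : ℕ+ => r ^ (l : ℕ)) :=
  (summable_geometric_of_lt_one h0 h1).comp_injective (fun _ _ h => PNat.coe_injective h)

lemma summable_pnat_geo' {r : ℝ} (h0 : 0 ≤ r) (h1 : r < 1) :
    Summable (fun l : ℕ+ => r ^ ((l : ℕ) - 1)) := by
  have : Function.Injective (fun l : ℕ+ => (l : ℕ) - 1) := by
    intro a b h
    simp only at h
    have ha : 0 < (a : ℕ) := a.property
    have hb : 0 < (b : ℕ) := b.property
    exact PNat.coe_injective (by omega)
  exact (summable_geometric_of_lt_one h0 h1).comp_injective this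

lemma summable_geo_prod {r : ℝ} (h0 : 0 ≤ r) (h1 : r < 1) :
    Summable (fun p : ℕ+ × ℕ+ => r ^ ((p.1 : ℕ) * (p.2 : ℕ))) := by
  apply Summable.of_nonneg_of_le (fun p => pow_nonneg h0 _) (fun p => ?_)
    ((summable_pnat_geo h0 h1).mul_of_nonneg (summable_pnat_geo' h0 h1)
      (fun _ => pow_nonneg h0 _) (fun _ => pow_nonneg h0 _))
  rw [← pow_add]
  apply pow_le_pow_of_le_one h0 h1.le
  have h1' := p.1.2
  obtain ⟨b2, hb2⟩ : ∃ b2, (p.2 : ℕ) = b2 + 1 :=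
    ⟨(p.2 : ℕ) - 1, by have h2' : 0 < (p.2 : ℕ) := p.2.property; omega⟩
  rw [hb2]
  have : b2 ≤ (p.1 : ℕ) * b2 := Nat.le_mul_of_pos_left _ h1'
  have hr : (p.1 : ℕ) * (b2 + 1) = (p.1 : ℕ) + (p.1 : ℕ) * b2 := by ring
  simp only [Nat.add_sub_cancel]
  omega

lemma summable_of_bound {f : ℕ+ × ℕ+ → ℂ} {C r : ℝ} (h0 : 0 ≤ r) (h1 : r < 1)
    (hf : ∀ p : ℕ+ × ℕ+, ‖f p‖ ≤ C * r ^ ((p.1 : ℕ) * (p.2 : ℕ))) : Summable f :=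
  Summable.of_norm (Summable.of_nonneg_of_le (fun _ => norm_nonneg _) hf
    ((summable_geo_prod h0 h1).mul_left C))

noncomputable def term {q₁ q₂ : ℕ} (χ₁ : DirichletCharacter ℂ q₁)
    (χ₂ : DirichletCharacter ℂ q₂) (w : ℂ) (p : ℕ+ × ℕ+) : ℂ :=
  χ₁ ((p.1 : ℕ) : ZMod q₁) * (starRingEnd ℂ) (χ₂ ((p.2 : ℕ) : ZMod q₂)) / ((p.1 : ℕ) : ℂ)
    * eC (((p.2 : ℕ) : ℂ) * ((p.1 : ℕ) : ℂ) * w)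

lemma norm_char_frac_le {q₁ q₂ : ℕ} (χ₁ : DirichletCharacter ℂ q₁)
    (χ₂ : DirichletCharacter ℂ q₂) (l k : ℕ+) :
    ‖χ₁ ((l : ℕ) : ZMod q₁) * (starRingEnd ℂ) (χ₂ ((k : ℕ) : ZMod q₂)) / ((l : ℕ) : ℂ)‖ ≤ 1 := by
  have hl1 : (1 : ℝ) ≤ ‖((l : ℕ) : ℂ)‖ := by
    rw [Complex.norm_natCast]
    exact_mod_cast l.property
  rw [norm_div]
  apply div_le_one_of_le₀ ?_ (norm_nonneg _)
  calc ‖χ₁ ((l : ℕ) : ZMod q₁) * (starRingEnd ℂ) (χ₂ ((k : ℕ) : ZMod q₂))‖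
      ≤ ‖χ₁ ((l : ℕ) : ZMod q₁)‖ * ‖(starRingEnd ℂ) (χ₂ ((k : ℕ) : ZMod q₂))‖ :=
        norm_mul_le _ _
    _ ≤ 1 * 1 := by
        apply mul_le_mul ?_ ?_ (norm_nonneg _) zero_le_one
        · exact DirichletCharacter.norm_le_one _ _
        · rw [RingHomIsometric.norm_map]
          exact DirichletCharacter.norm_le_one _ _
    _ ≤ ‖((l : ℕ) : ℂ)‖ := by rw [one_mul]; exact hl1

lemma norm_term_le {q₁ q₂ : ℕ} (χ₁ : DirichletCharacter ℂ q₁)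
    (χ₂ : DirichletCharacter ℂ q₂) (w : ℂ) (p : ℕ+ × ℕ+) :
    ‖term χ₁ χ₂ w p‖ ≤ Real.exp (-(2 * Real.pi * w.im)) ^ ((p.1 : ℕ) * (p.2 : ℕ)) := by
  obtain ⟨l, k⟩ := p
  have hE : ‖eC (((k : ℕ) : ℂ) * ((l : ℕ) : ℂ) * w)‖
      = Real.exp (-(2 * Real.pi * w.im)) ^ ((l : ℕ) * (k : ℕ)) := by
    rw [norm_eC, ← Real.exp_nat_mul]
    congr 1
    have him : ((((k : ℕ)) : ℂ) * (((l : ℕ)) : ℂ) * w).im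
        = ((k : ℕ) : ℝ) * ((l : ℕ) : ℝ) * w.im := by
      simp [Complex.mul_im, Complex.mul_re]
    rw [him]; push_cast; ring
  rw [term, norm_mul, hE]
  exact mul_le_of_le_one_left (pow_nonneg (Real.exp_nonneg _) _) (norm_char_frac_le χ₁ χ₂ l k)

lemma summable_term {q₁ q₂ : ℕ} (χ₁ : DirichletCharacter ℂ q₁)
    (χ₂ : DirichletCharacter ℂ q₂) (w : ℂ) (hw : 0 < w.im) :
    Summable (term χ₁ χ₂ w) := by
  exact summable_of_bound (r := Real.exp (-(2 * Real.pi * w.im))) (C := 1)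
    (Real.exp_nonneg _)
    (Real.exp_lt_one_iff.mpr (by nlinarith [Real.pi_pos]))
    (fun p => by simpa using norm_term_le χ₁ χ₂ w p)

lemma fE_eq_tsum {q₁ q₂ : ℕ} (χ₁ : DirichletCharacter ℂ q₁)
    (χ₂ : DirichletCharacter ℂ q₂) (w : ℂ) (hw : 0 < w.im) :
    fE χ₁ χ₂ w = ∑' p : ℕ+ × ℕ+, term χ₁ χ₂ w p := by
  rw [fE]
  exact (Summable.tsum_prod' (summable_term χ₁ χ₂ w hw) (summable_term χ₁ χ₂ w hw).prod_factor).symm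

/-! ### natural number facts for the Hecke bijection -/

lemma H1aux {n b u : ℕ} (hb : b ∣ n) (hu : u ∣ b) (hb0 : 0 < b) :
    n / b * (b / u) = n / u := by
  rw [Nat.div_mul_div_comm hb hu, mul_comm b u, Nat.mul_div_mul_right _ _ hb0]

lemma phi_nat_facts {n b l' k' u d l k : ℕ} (hn : n ≠ 0) (hb : b ∣ n)
    (hl0 : 0 < l') (hk0 : 0 < k')
    (hu : u = Nat.gcd b l') (hd : d = n / u) (hl : l = (n / b) * (l' / u))
    (hk : k = (b / u) * k') :
    0 < d ∧ 0 < l ∧ 0 < k ∧ d ∣ n ∧ n / d = u ∧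
    k * l = d * ((l' / u) * k') ∧ u * l = (n / b) * l' ∧ u * k = b * k' ∧
    d * l' = b * l ∧ k * l * u = k' * l' * d ∧
    Nat.gcd d l = n / b ∧ n / Nat.gcd d l = b ∧
    (l / Nat.gcd d l) * (n / d) = l' ∧ k / (d / Nat.gcd d l) = k' := by
  have hn0 : 0 < n := Nat.pos_of_ne_zero hn
  have hb0 : 0 < b := Nat.pos_of_dvd_of_pos hb hn0
  subst hu hd hl hk
  set u := Nat.gcd b l' with hu
  have hub : u ∣ b := Nat.gcd_dvd_left _ _
  have hul : u ∣ l' := Nat.gcd_dvd_right _ _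
  have hu0 : 0 < u := Nat.gcd_pos_of_pos_left _ hb0
  have hun : u ∣ n := hub.trans hb
  have hd0 : 0 < n / u := Nat.div_pos (Nat.le_of_dvd hn0 hun) hu0
  have hnb0 : 0 < n / b := Nat.div_pos (Nat.le_of_dvd hn0 hb) hb0
  have hlu0 : 0 < l' / u := Nat.div_pos (Nat.le_of_dvd hl0 hul) hu0
  have hbu0 : 0 < b / u := Nat.div_pos (Nat.le_of_dvd hb0 hub) hu0
  have key : n / b * (b / u) = n / u := H1aux hb hub hb0
  have hdn : n / u ∣ n := Nat.div_dvd_of_dvd hun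
  have hnd : n / (n / u) = u := Nat.div_div_self hun hn
  have hul' : u * (l' / u) = l' := Nat.mul_div_cancel' hul
  have hub' : u * (b / u) = b := Nat.mul_div_cancel' hub
  have hklu : k' * l' * (n / u) = (b / u * k') * (n / b * (l' / u)) * u := by
    calc k' * l' * (n / u) = k' * (u * (l' / u)) * (n / b * (b / u)) := by rw [hul', key]
    _ = (b / u * k') * (n / b * (l' / u)) * u := by ring
  have hgcd : Nat.gcd (n / u) (n / b * (l' / u)) = n / b := by
    rw [← key, Nat.gcd_mul_left]
    have hcop : Nat.Coprime (b / u) (l' / u) := Nat.coprime_div_gcd_div_gcd hu0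
    rw [Nat.Coprime] at hcop
    rw [hcop, mul_one]
  refine ⟨hd0, by positivity, by positivity, hdn, hnd, ?_, ?_, ?_, ?_, ?_, hgcd, ?_, ?_, ?_⟩
  · calc (b / u * k') * (n / b * (l' / u)) = (n / b * (b / u)) * (l' / u * k') := by ring
      _ = n / u * (l' / u * k') := by rw [key]
  · calc u * (n / b * (l' / u)) = n / b * (u * (l' / u)) := by ring
      _ = n / b * l' := by rw [hul']
  · calc u * (b / u * k') = (u * (b / u)) * k' := by ring
      _ = b * k' := by rw [hub']
  · calc n / u * l' = n / u * (u * (l' / u)) := by rw [hul']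
      _ = (n / u * u) * (l' / u) := by ring
      _ = n * (l' / u) := by rw [Nat.div_mul_cancel hun]
      _ = (b * (n / b)) * (l' / u) := by rw [Nat.mul_div_cancel' hb]
      _ = b * (n / b * (l' / u)) := by ring
  · exact hklu.symm
  · rw [hgcd]
    exact Nat.div_div_self hb hn
  · rw [hgcd, Nat.mul_div_cancel_left _ hnb0, hnd, Nat.div_mul_cancel hul]
  · rw [hgcd, ← key, Nat.mul_div_cancel_left _ hnb0, Nat.mul_div_cancel_left _ hbu0]

lemma psi_nat_facts {n d l k g : ℕ} (hn : n ≠ 0) (hd : d ∣ n) (hl0 : 0 < l) (hk0 : 0 < k)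
    (hdlk : d ∣ k * l) (hg : g = Nat.gcd d l) :
    (n / g) ∣ n ∧ 0 < n / g ∧ 0 < (l / g) * (n / d) ∧ 0 < k / (d / g) ∧
    Nat.gcd (n / g) ((l / g) * (n / d)) = n / d ∧
    n / (n / d) = d ∧
    (n / (n / g)) * (((l / g) * (n / d)) / (n / d)) = l ∧
    ((n / g) / (n / d)) * (k / (d / g)) = k := by
  have hn0 : 0 < n := Nat.pos_of_ne_zero hn
  have hd0 : 0 < d := Nat.pos_of_dvd_of_pos hd hn0
  subst hg
  set g := Nat.gcd d l with hg
  have hgd : g ∣ d := Nat.gcd_dvd_left _ _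
  have hgl : g ∣ l := Nat.gcd_dvd_right _ _
  have hg0 : 0 < g := Nat.gcd_pos_of_pos_left _ hd0
  have hgn : g ∣ n := hgd.trans hd
  have hcop : Nat.Coprime (d / g) (l / g) := Nat.coprime_div_gcd_div_gcd hg0
  have hd1k : (d / g) ∣ k := by
    apply hcop.dvd_of_dvd_mul_right
    have h2 : g * (d / g) ∣ k * (g * (l / g)) := by
      rw [Nat.mul_div_cancel' hgd, Nat.mul_div_cancel' hgl]; exact hdlk
    have h3 : k * (g * (l / g)) = g * (k * (l / g)) := by ring
    rw [h3] at h2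
    exact (mul_dvd_mul_iff_left hg0.ne').mp h2
  have key2 : n / d * (d / g) = n / g := H1aux hd hgd hd0
  have hnd0 : 0 < n / d := Nat.div_pos (Nat.le_of_dvd hn0 hd) hd0
  have hng0 : 0 < n / g := Nat.div_pos (Nat.le_of_dvd hn0 hgn) hg0
  have hlg0 : 0 < l / g := Nat.div_pos (Nat.le_of_dvd hl0 hgl) hg0
  have hdg0 : 0 < d / g := Nat.div_pos (Nat.le_of_dvd hd0 hgd) hg0
  have hkd0 : 0 < k / (d / g) := Nat.div_pos (Nat.le_of_dvd hk0 hd1k) hdg0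
  have hA : Nat.gcd (n / g) ((l / g) * (n / d)) = n / d := by
    rw [← key2, mul_comm (l / g) (n / d), Nat.gcd_mul_left]
    rw [Nat.Coprime] at hcop
    rw [hcop, mul_one]
  refine ⟨Nat.div_dvd_of_dvd hgn, hng0, by positivity, hkd0, hA, Nat.div_div_self hd hn, ?_, ?_⟩
  · rw [Nat.div_div_self hgn hn, Nat.mul_div_cancel _ hnd0, Nat.mul_div_cancel' hgl]
  · rw [← key2, Nat.mul_div_cancel_left _ hnd0, Nat.mul_div_cancel' hd1k]

/-! ### the two sides as sums over a common index type -/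

noncomputable def FF {q₁ q₂ : ℕ} (χ₁ : DirichletCharacter ℂ q₁) (χ₂ : DirichletCharacter ℂ q₂)
    (n : ℕ) (z : ℂ) (q : {d : ℕ // d ∈ n.divisors} × ℕ+ × ℕ+) : ℂ :=
  (χ₁ ((n / q.1.1 : ℕ) : ZMod q₁) * (starRingEnd ℂ) (χ₂ ((n / q.1.1 : ℕ) : ZMod q₂))) *
    (χ₁ ((q.2.1 : ℕ) : ZMod q₁) * (starRingEnd ℂ) (χ₂ ((q.2.2 : ℕ) : ZMod q₂)) / ((q.2.1 : ℕ) : ℂ)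
      * (eC (((q.2.2 : ℕ) : ℂ) * ((q.2.1 : ℕ) : ℂ) * (((n / q.1.1 : ℕ) : ℂ) * z / ((q.1.1 : ℕ) : ℂ)))
        * (if (q.1.1 : ℕ) ∣ (q.2.2 : ℕ) * (q.2.1 : ℕ) then ((q.1.1 : ℕ) : ℂ) else 0)))

noncomputable def GG {q₁ q₂ : ℕ} (χ₁ : DirichletCharacter ℂ q₁) (χ₂ : DirichletCharacter ℂ q₂)
    (n : ℕ) (z : ℂ) (q : {d : ℕ // d ∈ n.divisors} × ℕ+ × ℕ+) : ℂ :=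
  (χ₁ ((n / q.1.1 : ℕ) : ZMod q₁) * (starRingEnd ℂ) (χ₂ ((q.1.1 : ℕ) : ZMod q₂)) * ((q.1.1 : ℕ) : ℂ))
    * term χ₁ χ₂ z q.2

/-- The Hecke bijection. -/
noncomputable def PhiH (n : ℕ) (q : {d : ℕ // d ∈ n.divisors} × ℕ+ × ℕ+) :
    {d : ℕ // d ∈ n.divisors} × ℕ+ × ℕ+ :=
  ⟨⟨n / Nat.gcd q.1.1 (q.2.1 : ℕ), by
      have h := Nat.mem_divisors.mp q.1.2
      exact Nat.mem_divisors.mpr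
        ⟨Nat.div_dvd_of_dvd ((Nat.gcd_dvd_left _ _).trans h.1), h.2⟩⟩,
   ⟨(n / q.1.1) * ((q.2.1 : ℕ) / Nat.gcd q.1.1 (q.2.1 : ℕ)), by
      have h := Nat.mem_divisors.mp q.1.2
      have hn0 : 0 < n := Nat.pos_of_ne_zero h.2
      have hb0 : 0 < q.1.1 := Nat.pos_of_dvd_of_pos h.1 hn0
      have hu0 : 0 < Nat.gcd q.1.1 (q.2.1 : ℕ) := Nat.gcd_pos_of_pos_left _ hb0
      exact Nat.mul_pos (Nat.div_pos (Nat.le_of_dvd hn0 h.1) hb0)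
        (Nat.div_pos (Nat.le_of_dvd q.2.1.pos (Nat.gcd_dvd_right _ _)) hu0)⟩,
   ⟨(q.1.1 / Nat.gcd q.1.1 (q.2.1 : ℕ)) * (q.2.2 : ℕ), by
      have h := Nat.mem_divisors.mp q.1.2
      have hn0 : 0 < n := Nat.pos_of_ne_zero h.2
      have hb0 : 0 < q.1.1 := Nat.pos_of_dvd_of_pos h.1 hn0
      have hu0 : 0 < Nat.gcd q.1.1 (q.2.1 : ℕ) := Nat.gcd_pos_of_pos_left _ hb0
      exact Nat.mul_pos (Nat.div_pos (Nat.le_of_dvd hb0 (Nat.gcd_dvd_left _ _)) hu0)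
        q.2.2.pos⟩⟩

lemma FF_phi {q₁ q₂ : ℕ} (χ₁ : DirichletCharacter ℂ q₁) (χ₂ : DirichletCharacter ℂ q₂)
    (n : ℕ) (z : ℂ) (q : {d : ℕ // d ∈ n.divisors} × ℕ+ × ℕ+) :
    FF χ₁ χ₂ n z (PhiH n q) = GG χ₁ χ₂ n z q := by
  obtain ⟨⟨b, hbmem⟩, l', k'⟩ := q
  obtain ⟨hbn, hn⟩ := Nat.mem_divisors.mp hbmem
  have hn0 : 0 < n := Nat.pos_of_ne_zero hn
  have hb0 : 0 < b := Nat.pos_of_dvd_of_pos hbn hn0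
  obtain ⟨hd0, hl0, hk0, hdn, hnd, hkl, hul, huk, hdl, hklu, -, -, -, -⟩ :=
    phi_nat_facts (u := Nat.gcd b (l' : ℕ)) (d := n / Nat.gcd b (l' : ℕ))
      (l := (n / b) * ((l' : ℕ) / Nat.gcd b (l' : ℕ)))
      (k := (b / Nat.gcd b (l' : ℕ)) * (k' : ℕ))
      hn hbn l'.pos k'.pos rfl rfl rfl rfl
  set u := Nat.gcd b (l' : ℕ) with hu
  set d := n / u with hdd
  set l := (n / b) * ((l' : ℕ) / u) with hll
  set k := (b / u) * (k' : ℕ) with hkk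
  -- unfold
  show (χ₁ ((n / d : ℕ) : ZMod q₁) * (starRingEnd ℂ) (χ₂ ((n / d : ℕ) : ZMod q₂))) *
    (χ₁ ((l : ℕ) : ZMod q₁) * (starRingEnd ℂ) (χ₂ ((k : ℕ) : ZMod q₂)) / ((l : ℕ) : ℂ)
      * (eC (((k : ℕ) : ℂ) * ((l : ℕ) : ℂ) * (((n / d : ℕ) : ℂ) * z / ((d : ℕ) : ℂ)))
        * (if (d : ℕ) ∣ k * l then ((d : ℕ) : ℂ) else 0)))
    = (χ₁ ((n / b : ℕ) : ZMod q₁) * (starRingEnd ℂ) (χ₂ ((b : ℕ) : ZMod q₂)) * ((b : ℕ) : ℂ))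
      * term χ₁ χ₂ z (l', k')
  have hterm : term χ₁ χ₂ z (l', k')
      = χ₁ ((l' : ℕ) : ZMod q₁) * (starRingEnd ℂ) (χ₂ ((k' : ℕ) : ZMod q₂)) / ((l' : ℕ) : ℂ)
        * eC (((k' : ℕ) : ℂ) * ((l' : ℕ) : ℂ) * z) := rfl
  rw [hnd, if_pos ⟨(l' : ℕ) / u * (k' : ℕ), hkl⟩, hterm]
  clear_value u d l k
  have hdC : ((d : ℕ) : ℂ) ≠ 0 := Nat.cast_ne_zero.mpr hd0.ne'
  have hlC : ((l : ℕ) : ℂ) ≠ 0 := Nat.cast_ne_zero.mpr hl0.ne'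
  have hl'C : (((l' : ℕ) : ℕ) : ℂ) ≠ 0 := Nat.cast_ne_zero.mpr l'.property.ne'
  have e1 : χ₁ ((u : ℕ) : ZMod q₁) * χ₁ ((l : ℕ) : ZMod q₁)
      = χ₁ ((n / b : ℕ) : ZMod q₁) * χ₁ (((l' : ℕ) : ℕ) : ZMod q₁) := by
    rw [← map_mul, ← map_mul, ← Nat.cast_mul, ← Nat.cast_mul, hul]
  have e2 : (starRingEnd ℂ) (χ₂ ((u : ℕ) : ZMod q₂)) * (starRingEnd ℂ) (χ₂ ((k : ℕ) : ZMod q₂))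
      = (starRingEnd ℂ) (χ₂ ((b : ℕ) : ZMod q₂))
        * (starRingEnd ℂ) (χ₂ (((k' : ℕ) : ℕ) : ZMod q₂)) := by
    rw [← map_mul (starRingEnd ℂ), ← map_mul (starRingEnd ℂ), ← map_mul χ₂, ← map_mul χ₂,
      ← Nat.cast_mul, ← Nat.cast_mul, huk]
  have e3 : ((k : ℕ) : ℂ) * ((l : ℕ) : ℂ) * (((u : ℕ) : ℂ) * z / ((d : ℕ) : ℂ))
      = (((k' : ℕ) : ℕ) : ℂ) * (((l' : ℕ) : ℕ) : ℂ) * z := by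
    have hcast : ((k : ℕ) : ℂ) * ((l : ℕ) : ℂ) * ((u : ℕ) : ℂ)
        = (((k' : ℕ) : ℕ) : ℂ) * (((l' : ℕ) : ℕ) : ℂ) * ((d : ℕ) : ℂ) := by
      have := congrArg (fun m : ℕ => (m : ℂ)) hklu
      push_cast at this ⊢
      linear_combination (norm := ring1!) this
    field_simp
    linear_combination (norm := ring1!) z * hcast
  have e6 : ((d : ℕ) : ℂ) / ((l : ℕ) : ℂ) = ((b : ℕ) : ℂ) / (((l' : ℕ) : ℕ) : ℂ) := by
    rw [div_eq_div_iff hlC hl'C]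
    have := congrArg (fun m : ℕ => (m : ℂ)) hdl
    push_cast at this ⊢
    linear_combination (norm := ring1!) this
  rw [e3]
  calc (χ₁ ((u : ℕ) : ZMod q₁) * (starRingEnd ℂ) (χ₂ ((u : ℕ) : ZMod q₂))) *
      (χ₁ ((l : ℕ) : ZMod q₁) * (starRingEnd ℂ) (χ₂ ((k : ℕ) : ZMod q₂)) / ((l : ℕ) : ℂ)
        * (eC ((((k' : ℕ) : ℕ) : ℂ) * (((l' : ℕ) : ℕ) : ℂ) * z) * ((d : ℕ) : ℂ)))
      = (χ₁ ((u : ℕ) : ZMod q₁) * χ₁ ((l : ℕ) : ZMod q₁))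
        * ((starRingEnd ℂ) (χ₂ ((u : ℕ) : ZMod q₂)) * (starRingEnd ℂ) (χ₂ ((k : ℕ) : ZMod q₂)))
        * (((d : ℕ) : ℂ) / ((l : ℕ) : ℂ))
        * eC ((((k' : ℕ) : ℕ) : ℂ) * (((l' : ℕ) : ℕ) : ℂ) * z) := by ring
    _ = (χ₁ ((n / b : ℕ) : ZMod q₁) * χ₁ (((l' : ℕ) : ℕ) : ZMod q₁))
        * ((starRingEnd ℂ) (χ₂ ((b : ℕ) : ZMod q₂))
            * (starRingEnd ℂ) (χ₂ (((k' : ℕ) : ℕ) : ZMod q₂)))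
        * (((b : ℕ) : ℂ) / (((l' : ℕ) : ℕ) : ℂ))
        * eC ((((k' : ℕ) : ℕ) : ℂ) * (((l' : ℕ) : ℕ) : ℂ) * z) := by rw [e1, e2, e6]
    _ = (χ₁ ((n / b : ℕ) : ZMod q₁) * (starRingEnd ℂ) (χ₂ ((b : ℕ) : ZMod q₂)) * ((b : ℕ) : ℂ))
        * (χ₁ (((l' : ℕ) : ℕ) : ZMod q₁) * (starRingEnd ℂ) (χ₂ (((k' : ℕ) : ℕ) : ZMod q₂))
            / (((l' : ℕ) : ℕ) : ℂ)
          * eC ((((k' : ℕ) : ℕ) : ℂ) * (((l' : ℕ) : ℕ) : ℂ) * z)) := by ring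

lemma phiH_recover (n : ℕ) (q : {d : ℕ // d ∈ n.divisors} × ℕ+ × ℕ+) :
    q.1.1 = n / Nat.gcd ((PhiH n q).1.1) ((PhiH n q).2.1 : ℕ) ∧
    (q.2.1 : ℕ) = (((PhiH n q).2.1 : ℕ) / Nat.gcd ((PhiH n q).1.1) ((PhiH n q).2.1 : ℕ))
        * (n / (PhiH n q).1.1) ∧
    (q.2.2 : ℕ) = ((PhiH n q).2.2 : ℕ)
        / ((PhiH n q).1.1 / Nat.gcd ((PhiH n q).1.1) ((PhiH n q).2.1 : ℕ)) := by
  obtain ⟨⟨b, hbmem⟩, l', k'⟩ := q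
  obtain ⟨hbn, hn⟩ := Nat.mem_divisors.mp hbmem
  obtain ⟨-, -, -, -, -, -, -, -, -, -, -, A2, A3, A4⟩ :=
    phi_nat_facts (u := Nat.gcd b (l' : ℕ)) (d := n / Nat.gcd b (l' : ℕ))
      (l := (n / b) * ((l' : ℕ) / Nat.gcd b (l' : ℕ)))
      (k := (b / Nat.gcd b (l' : ℕ)) * (k' : ℕ))
      hn hbn l'.pos k'.pos rfl rfl rfl rfl
  exact ⟨A2.symm, A3.symm, A4.symm⟩

lemma phiH_inj (n : ℕ) : Function.Injective (PhiH n) := by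
  intro q q' h
  have r := phiH_recover n q
  have r' := phiH_recover n q'
  rw [h] at r
  obtain ⟨a1, a2, a3⟩ := r
  obtain ⟨b1, b2, b3⟩ := r'
  have h1 : q.1.1 = q'.1.1 := by rw [a1, b1]
  have h2 : (q.2.1 : ℕ) = (q'.2.1 : ℕ) := by rw [a2, b2]
  have h3 : (q.2.2 : ℕ) = (q'.2.2 : ℕ) := by rw [a3, b3]
  exact Prod.ext (Subtype.ext h1) (Prod.ext (PNat.coe_injective h2) (PNat.coe_injective h3))

lemma phiH_surj (n : ℕ) (q : {d : ℕ // d ∈ n.divisors} × ℕ+ × ℕ+)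
    (hdvd : (q.1.1 : ℕ) ∣ (q.2.2 : ℕ) * (q.2.1 : ℕ)) :
    ∃ j, PhiH n j = q := by
  obtain ⟨⟨d, hdmem⟩, l, k⟩ := q
  obtain ⟨hdn, hn⟩ := Nat.mem_divisors.mp hdmem
  obtain ⟨j1, j2, j3, j4, A, B, C, D⟩ :=
    psi_nat_facts (g := Nat.gcd d (l : ℕ)) hn hdn l.pos k.pos hdvd rfl
  refine ⟨(⟨n / Nat.gcd d (l : ℕ), Nat.mem_divisors.mpr ⟨j1, hn⟩⟩,
    ⟨((l : ℕ) / Nat.gcd d (l : ℕ)) * (n / d), j3⟩,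
    ⟨(k : ℕ) / (d / Nat.gcd d (l : ℕ)), j4⟩), ?_⟩
  have c1 : n / Nat.gcd (n / Nat.gcd d (l : ℕ)) (((l : ℕ) / Nat.gcd d (l : ℕ)) * (n / d)) = d := by
    rw [A]; exact B
  have c2 : (n / (n / Nat.gcd d (l : ℕ)))
      * ((((l : ℕ) / Nat.gcd d (l : ℕ)) * (n / d))
          / Nat.gcd (n / Nat.gcd d (l : ℕ)) (((l : ℕ) / Nat.gcd d (l : ℕ)) * (n / d)))
      = (l : ℕ) := by
    rw [A]; exact C
  have c3 : ((n / Nat.gcd d (l : ℕ))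
        / Nat.gcd (n / Nat.gcd d (l : ℕ)) (((l : ℕ) / Nat.gcd d (l : ℕ)) * (n / d)))
      * ((k : ℕ) / (d / Nat.gcd d (l : ℕ))) = (k : ℕ) := by
    rw [A]; exact D
  exact Prod.ext (Subtype.ext c1) (Prod.ext (PNat.coe_injective c2) (PNat.coe_injective c3))

lemma rho_lt_one {n : ℕ} (hn : n ≠ 0) {z : ℂ} (hz : 0 < z.im) :
    Real.exp (-(2 * Real.pi * (z.im / n))) < 1 := by
  have hn0 : 0 < (n : ℝ) := by exact_mod_cast Nat.pos_of_ne_zero hn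
  have : 0 < z.im / n := by positivity
  exact Real.exp_lt_one_iff.mpr (by nlinarith [Real.pi_pos])

lemma summable_FF {q₁ q₂ : ℕ} (χ₁ : DirichletCharacter ℂ q₁) (χ₂ : DirichletCharacter ℂ q₂)
    (n : ℕ) (hn : n ≠ 0) (z : ℂ) (hz : 0 < z.im) : Summable (FF χ₁ χ₂ n z) := by
  have hn0 : 0 < n := Nat.pos_of_ne_zero hn
  have hnR : (0 : ℝ) < n := by exact_mod_cast hn0
  set ρ := Real.exp (-(2 * Real.pi * (z.im / n))) with hρ
  have hρ0 : 0 ≤ ρ := Real.exp_nonneg _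
  have hρ1 : ρ < 1 := rho_lt_one hn hz
  apply Summable.of_norm
  apply Summable.of_nonneg_of_le (fun _ => norm_nonneg _) ?_
    ((Summable.of_finite (f := fun _ : {d : ℕ // d ∈ n.divisors} => (n : ℝ))).mul_of_nonneg
      (summable_geo_prod hρ0 hρ1) (fun _ => Nat.cast_nonneg n) (fun _ => pow_nonneg hρ0 _))
  rintro ⟨⟨d, hdmem⟩, l, k⟩
  obtain ⟨hdn, -⟩ := Nat.mem_divisors.mp hdmem
  have hd0 : 0 < d := Nat.pos_of_dvd_of_pos hdn hn0
  have hdR : (0 : ℝ) < d := by exact_mod_cast hd0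
  have hu0 : 0 < n / d := Nat.div_pos (Nat.le_of_dvd hn0 hdn) hd0
  have huR : (1 : ℝ) ≤ ((n / d : ℕ) : ℝ) := by exact_mod_cast hu0
  have hdnR : (d : ℝ) ≤ n := by exact_mod_cast Nat.le_of_dvd hn0 hdn
  have hud : ((n / d : ℕ) : ℝ) * (d : ℝ) = (n : ℝ) := by exact_mod_cast Nat.div_mul_cancel hdn
  have hkR : (1 : ℝ) ≤ ((k : ℕ) : ℝ) := by exact_mod_cast k.pos
  have hlR : (1 : ℝ) ≤ ((l : ℕ) : ℝ) := by exact_mod_cast l.pos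
  -- bound on the exponential factor
  have hexpr : ((k : ℕ) : ℂ) * ((l : ℕ) : ℂ) * (((n / d : ℕ) : ℂ) * z / ((d : ℕ) : ℂ))
      = ((((k : ℕ) : ℝ) * ((l : ℕ) : ℝ) * ((n / d : ℕ) : ℝ) / ((d : ℕ) : ℝ) : ℝ) : ℂ) * z := by
    push_cast
    field_simp
  have hE : ‖eC (((k : ℕ) : ℂ) * ((l : ℕ) : ℂ) * (((n / d : ℕ) : ℂ) * z / ((d : ℕ) : ℂ)))‖
      ≤ ρ ^ ((l : ℕ) * (k : ℕ)) := by
    rw [hexpr, norm_eC, hρ, ← Real.exp_nat_mul]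
    apply Real.exp_le_exp.mpr
    rw [Complex.im_ofReal_mul]
    have hcast : (((l : ℕ) * (k : ℕ) : ℕ) : ℝ) = ((l : ℕ) : ℝ) * ((k : ℕ) : ℝ) := by push_cast; ring
    rw [hcast]
    have hKL : (0:ℝ) < ((k : ℕ) : ℝ) * ((l : ℕ) : ℝ) * z.im :=
      mul_pos (mul_pos (lt_of_lt_of_le one_pos hkR) (lt_of_lt_of_le one_pos hlR)) hz
    have hb : ((l : ℕ) : ℝ) * ((k : ℕ) : ℝ) * (z.im / (n : ℝ))
        ≤ ((k : ℕ) : ℝ) * ((l : ℕ) : ℝ) * ((n / d : ℕ) : ℝ) * z.im / ((d : ℕ) : ℝ) := by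
      rw [mul_div_assoc' _ _ ((n : ℝ)), div_le_div_iff₀ hnR hdR]
      have h3 : ((k : ℕ) : ℝ) * ((l : ℕ) : ℝ) * z.im * ((d : ℕ) : ℝ)
          * (((n / d : ℕ) : ℝ) * ((n / d : ℕ) : ℝ))
          = ((k : ℕ) : ℝ) * ((l : ℕ) : ℝ) * ((n / d : ℕ) : ℝ) * z.im * ((n : ℕ) : ℝ) := by
        rw [← hud]; ring
      have h4 : (0:ℝ) ≤ (((k : ℕ) : ℝ) * ((l : ℕ) : ℝ) * z.im * ((d : ℕ) : ℝ))
          * (((n / d : ℕ) : ℝ) * ((n / d : ℕ) : ℝ) - 1) :=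
        mul_nonneg (mul_pos hKL hdR).le (by nlinarith [huR])
      nlinarith [h3, h4]
    have h5 := mul_le_mul_of_nonneg_left hb (by positivity : (0:ℝ) ≤ 2 * Real.pi)
    ring_nf at h5 ⊢
    linarith [h5]
  have h1 : ‖χ₁ ((n / d : ℕ) : ZMod q₁) * (starRingEnd ℂ) (χ₂ ((n / d : ℕ) : ZMod q₂))‖ ≤ 1 := by
    refine (norm_mul_le _ _).trans ?_
    rw [RingHomIsometric.norm_map]
    have a1 := DirichletCharacter.norm_le_one χ₁ ((n / d : ℕ) : ZMod q₁)
    have a2 := DirichletCharacter.norm_le_one χ₂ ((n / d : ℕ) : ZMod q₂)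
    nlinarith [norm_nonneg (χ₁ ((n / d : ℕ) : ZMod q₁)), norm_nonneg (χ₂ ((n / d : ℕ) : ZMod q₂))]
  have h2 := norm_char_frac_le χ₁ χ₂ l k
  have h4 : ‖(if d ∣ (k : ℕ) * (l : ℕ) then ((d : ℕ) : ℂ) else 0)‖ ≤ (n : ℝ) := by
    split
    · rw [Complex.norm_natCast]; exact hdnR
    · simpa using hnR.le
  have hassemble : ‖FF χ₁ χ₂ n z (⟨d, hdmem⟩, l, k)‖
      ≤ 1 * (1 * (ρ ^ ((l : ℕ) * (k : ℕ)) * n)) := by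
    simp only [FF]
    refine (norm_mul_le _ _).trans ?_
    refine mul_le_mul h1 ?_ (norm_nonneg _) zero_le_one
    refine (norm_mul_le _ _).trans ?_
    refine mul_le_mul h2 ?_ (norm_nonneg _) zero_le_one
    refine (norm_mul_le _ _).trans ?_
    exact mul_le_mul hE h4 (norm_nonneg _) (pow_nonneg hρ0 _)
  calc ‖FF χ₁ χ₂ n z (⟨d, hdmem⟩, l, k)‖ ≤ 1 * (1 * (ρ ^ ((l : ℕ) * (k : ℕ)) * n)) := hassemble
    _ = (n : ℝ) * ρ ^ ((l : ℕ) * (k : ℕ)) := by ring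

lemma summable_GG {q₁ q₂ : ℕ} (χ₁ : DirichletCharacter ℂ q₁) (χ₂ : DirichletCharacter ℂ q₂)
    (n : ℕ) (hn : n ≠ 0) (z : ℂ) (hz : 0 < z.im) : Summable (GG χ₁ χ₂ n z) := by
  have hn0 : 0 < n := Nat.pos_of_ne_zero hn
  have hnR : (0 : ℝ) < n := by exact_mod_cast hn0
  have hnR1 : (1 : ℝ) ≤ n := by exact_mod_cast hn0
  set ρ := Real.exp (-(2 * Real.pi * (z.im / n))) with hρ
  have hρ0 : 0 ≤ ρ := Real.exp_nonneg _
  have hρ1 : ρ < 1 := rho_lt_one hn hz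
  apply Summable.of_norm
  apply Summable.of_nonneg_of_le (fun _ => norm_nonneg _) ?_
    ((Summable.of_finite (f := fun _ : {d : ℕ // d ∈ n.divisors} => (n : ℝ))).mul_of_nonneg
      (summable_geo_prod hρ0 hρ1) (fun _ => Nat.cast_nonneg n) (fun _ => pow_nonneg hρ0 _))
  rintro ⟨⟨d, hdmem⟩, l, k⟩
  obtain ⟨hdn, -⟩ := Nat.mem_divisors.mp hdmem
  have hdnR : ((d : ℕ) : ℝ) ≤ n := by exact_mod_cast Nat.le_of_dvd hn0 hdn
  have h1 : ‖χ₁ ((n / d : ℕ) : ZMod q₁) * (starRingEnd ℂ) (χ₂ ((d : ℕ) : ZMod q₂))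
      * ((d : ℕ) : ℂ)‖ ≤ (n : ℝ) := by
    refine (norm_mul_le _ _).trans ?_
    rw [Complex.norm_natCast]
    have hd1 : ‖χ₁ ((n / d : ℕ) : ZMod q₁) * (starRingEnd ℂ) (χ₂ ((d : ℕ) : ZMod q₂))‖ ≤ 1 := by
      refine (norm_mul_le _ _).trans ?_
      rw [RingHomIsometric.norm_map]
      have a1 := DirichletCharacter.norm_le_one χ₁ ((n / d : ℕ) : ZMod q₁)
      have a2 := DirichletCharacter.norm_le_one χ₂ ((d : ℕ) : ZMod q₂)
      nlinarith [norm_nonneg (χ₁ ((n / d : ℕ) : ZMod q₁)),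
        norm_nonneg (χ₂ ((d : ℕ) : ZMod q₂))]
    have hd0R : (0 : ℝ) ≤ (d : ℝ) := Nat.cast_nonneg d
    nlinarith [norm_nonneg (χ₁ ((n / d : ℕ) : ZMod q₁) * (starRingEnd ℂ) (χ₂ ((d : ℕ) : ZMod q₂)))]
  have h2 : ‖term χ₁ χ₂ z (l, k)‖ ≤ ρ ^ ((l : ℕ) * (k : ℕ)) := by
    refine (norm_term_le χ₁ χ₂ z (l, k)).trans ?_
    apply pow_le_pow_left₀ (Real.exp_nonneg _)
    apply Real.exp_le_exp.mpr
    have : z.im / n ≤ z.im := by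
      rw [div_le_iff₀ hnR]
      nlinarith [hz]
    nlinarith [Real.pi_pos, this]
  have : ‖GG χ₁ χ₂ n z (⟨d, hdmem⟩, l, k)‖ ≤ (n : ℝ) * ρ ^ ((l : ℕ) * (k : ℕ)) := by
    simp only [GG]
    exact (norm_mul_le _ _).trans
      (mul_le_mul h1 h2 (norm_nonneg _) hnR.le)
  exact this


theorem hecke_eigenfunction
    {q₁ q₂ : ℕ} (hq₁ : 1 < q₁) (hq₂ : 1 < q₂)
    (χ₁ : DirichletCharacter ℂ q₁) (χ₂ : DirichletCharacter ℂ q₂)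
    (hχ₁ : χ₁.IsPrimitive) (hχ₂ : χ₂.IsPrimitive)
    (hpar : χ₁ (-1) * χ₂ (-1) = 1)
    (n : ℕ) (hn : 1 ≤ n) (z : ℂ) (hz : 0 < z.im) :
    ∑ d ∈ n.divisors,
      (χ₁ (((n / d : ℕ) : ℕ) : ZMod q₁) * (starRingEnd ℂ) (χ₂ (((n / d : ℕ) : ℕ) : ZMod q₂))) *
        ∑ b ∈ Finset.range d, fE χ₁ χ₂ ((((n / d : ℕ) : ℂ) * z + (b : ℂ)) / (d : ℂ)) =
    (∑ d ∈ n.divisors,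
        χ₁ (((n / d : ℕ) : ℕ) : ZMod q₁) * (starRingEnd ℂ) (χ₂ ((d : ℕ) : ZMod q₂)) * (d : ℂ)) *
      fE χ₁ χ₂ z := by
  have hn' : n ≠ 0 := by omega
  have hn0 : 0 < n := Nat.pos_of_ne_zero hn'
  have hFF := summable_FF χ₁ χ₂ n hn' z hz
  have hGGs := summable_GG χ₁ χ₂ n hn' z hz
  have step1 : ∀ dd : {x : ℕ // x ∈ n.divisors},
      (χ₁ ((n / dd.1 : ℕ) : ZMod q₁) * (starRingEnd ℂ) (χ₂ ((n / dd.1 : ℕ) : ZMod q₂))) *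
        ∑ b ∈ Finset.range dd.1, fE χ₁ χ₂ ((((n / dd.1 : ℕ) : ℂ) * z + (b : ℂ)) / (dd.1 : ℂ))
      = ∑' p : ℕ+ × ℕ+, FF χ₁ χ₂ n z (dd, p) := by
    rintro ⟨d, hdmem⟩
    obtain ⟨hdn, -⟩ := Nat.mem_divisors.mp hdmem
    have hd0 : 0 < d := Nat.pos_of_dvd_of_pos hdn hn0
    have hdR : (0 : ℝ) < (d : ℝ) := by exact_mod_cast hd0
    have hu0 : 0 < n / d := Nat.div_pos (Nat.le_of_dvd hn0 hdn) hd0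
    have huR : (0 : ℝ) < ((n / d : ℕ) : ℝ) := by exact_mod_cast hu0
    have hdC : ((d : ℕ) : ℂ) ≠ 0 := Nat.cast_ne_zero.mpr hd0.ne'
    have him : ∀ b : ℕ, 0 < ((((n / d : ℕ) : ℂ) * z + ((b : ℕ) : ℂ)) / ((d : ℕ) : ℂ)).im := by
      intro b
      have heq : (((n / d : ℕ) : ℂ) * z + ((b : ℕ) : ℂ)) / ((d : ℕ) : ℂ)
          = ((((n / d : ℕ) : ℝ) / ((d : ℕ) : ℝ) : ℝ) : ℂ) * z
            + ((((b : ℕ) : ℝ) / ((d : ℕ) : ℝ) : ℝ) : ℂ) := by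
        push_cast
        field_simp
      rw [heq]
      simp only [Complex.add_im, Complex.im_ofReal_mul, Complex.ofReal_im, add_zero]
      exact mul_pos (div_pos huR hdR) hz
    calc (χ₁ ((n / d : ℕ) : ZMod q₁) * (starRingEnd ℂ) (χ₂ ((n / d : ℕ) : ZMod q₂))) *
        ∑ b ∈ Finset.range d, fE χ₁ χ₂ ((((n / d : ℕ) : ℂ) * z + (b : ℂ)) / (d : ℂ))
        = (χ₁ ((n / d : ℕ) : ZMod q₁) * (starRingEnd ℂ) (χ₂ ((n / d : ℕ) : ZMod q₂))) *
          ∑ b ∈ Finset.range d, ∑' p : ℕ+ × ℕ+,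
            term χ₁ χ₂ ((((n / d : ℕ) : ℂ) * z + ((b : ℕ) : ℂ)) / ((d : ℕ) : ℂ)) p := by
          rw [Finset.sum_congr rfl (fun b _ => fE_eq_tsum χ₁ χ₂ _ (him b))]
      _ = (χ₁ ((n / d : ℕ) : ZMod q₁) * (starRingEnd ℂ) (χ₂ ((n / d : ℕ) : ZMod q₂))) *
          ∑' p : ℕ+ × ℕ+, ∑ b ∈ Finset.range d,
            term χ₁ χ₂ ((((n / d : ℕ) : ℂ) * z + ((b : ℕ) : ℂ)) / ((d : ℕ) : ℂ)) p := by
          rw [Summable.tsum_finsetSum (fun b _ => summable_term χ₁ χ₂ _ (him b))]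
      _ = ∑' p : ℕ+ × ℕ+, (χ₁ ((n / d : ℕ) : ZMod q₁)
            * (starRingEnd ℂ) (χ₂ ((n / d : ℕ) : ZMod q₂))) *
          ∑ b ∈ Finset.range d,
            term χ₁ χ₂ ((((n / d : ℕ) : ℂ) * z + ((b : ℕ) : ℂ)) / ((d : ℕ) : ℂ)) p :=
          (tsum_mul_left).symm
      _ = ∑' p : ℕ+ × ℕ+, FF χ₁ χ₂ n z (⟨d, hdmem⟩, p) := by
          apply tsum_congr
          rintro ⟨l, k⟩
          have hterm0 : ∀ b : ℕ,
              term χ₁ χ₂ ((((n / d : ℕ) : ℂ) * z + ((b : ℕ) : ℂ)) / ((d : ℕ) : ℂ)) (l, k)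
              = χ₁ ((l : ℕ) : ZMod q₁) * (starRingEnd ℂ) (χ₂ ((k : ℕ) : ZMod q₂)) / ((l : ℕ) : ℂ)
                * (eC (((k : ℕ) : ℂ) * ((l : ℕ) : ℂ) * (((n / d : ℕ) : ℂ) * z / ((d : ℕ) : ℂ)))
                  * eC ((((k : ℕ) * (l : ℕ) : ℕ) : ℂ) * ((b : ℕ) : ℂ) / ((d : ℕ) : ℂ))) := by
            intro b
            have h0 : term χ₁ χ₂ ((((n / d : ℕ) : ℂ) * z + ((b : ℕ) : ℂ)) / ((d : ℕ) : ℂ)) (l, k)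
                = χ₁ ((l : ℕ) : ZMod q₁) * (starRingEnd ℂ) (χ₂ ((k : ℕ) : ZMod q₂))
                    / ((l : ℕ) : ℂ)
                  * eC (((k : ℕ) : ℂ) * ((l : ℕ) : ℂ)
                      * ((((n / d : ℕ) : ℂ) * z + ((b : ℕ) : ℂ)) / ((d : ℕ) : ℂ))) := rfl
            have harg : ((k : ℕ) : ℂ) * ((l : ℕ) : ℂ)
                * ((((n / d : ℕ) : ℂ) * z + ((b : ℕ) : ℂ)) / ((d : ℕ) : ℂ))
                = ((k : ℕ) : ℂ) * ((l : ℕ) : ℂ) * (((n / d : ℕ) : ℂ) * z / ((d : ℕ) : ℂ))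
                  + (((k : ℕ) * (l : ℕ) : ℕ) : ℂ) * ((b : ℕ) : ℂ) / ((d : ℕ) : ℂ) := by
              push_cast
              field_simp
            rw [h0, harg, eC_add]
          rw [Finset.sum_congr rfl (fun b _ => hterm0 b), ← Finset.mul_sum, ← Finset.mul_sum,
            sum_eC_eq d ((k : ℕ) * (l : ℕ)) hd0]
          rfl
  have hL : (∑ d ∈ n.divisors,
      (χ₁ (((n / d : ℕ) : ℕ) : ZMod q₁) * (starRingEnd ℂ) (χ₂ (((n / d : ℕ) : ℕ) : ZMod q₂))) *
        ∑ b ∈ Finset.range d, fE χ₁ χ₂ ((((n / d : ℕ) : ℂ) * z + (b : ℂ)) / (d : ℂ)))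
      = ∑' q : {x : ℕ // x ∈ n.divisors} × ℕ+ × ℕ+, FF χ₁ χ₂ n z q := by
    rw [← Finset.sum_coe_sort n.divisors]
    calc ∑ dd : {x : ℕ // x ∈ n.divisors},
        (χ₁ ((n / dd.1 : ℕ) : ZMod q₁) * (starRingEnd ℂ) (χ₂ ((n / dd.1 : ℕ) : ZMod q₂))) *
          ∑ b ∈ Finset.range dd.1, fE χ₁ χ₂ ((((n / dd.1 : ℕ) : ℂ) * z + (b : ℂ)) / (dd.1 : ℂ))
        = ∑ dd : {x : ℕ // x ∈ n.divisors}, ∑' p : ℕ+ × ℕ+, FF χ₁ χ₂ n z (dd, p) :=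
          Finset.sum_congr rfl (fun dd _ => step1 dd)
      _ = ∑' dd : {x : ℕ // x ∈ n.divisors}, ∑' p : ℕ+ × ℕ+, FF χ₁ χ₂ n z (dd, p) :=
          (tsum_fintype _).symm
      _ = ∑' q : {x : ℕ // x ∈ n.divisors} × ℕ+ × ℕ+, FF χ₁ χ₂ n z q :=
          (Summable.tsum_prod' hFF hFF.prod_factor).symm
  have hR : (∑ d ∈ n.divisors,
      χ₁ (((n / d : ℕ) : ℕ) : ZMod q₁) * (starRingEnd ℂ) (χ₂ ((d : ℕ) : ZMod q₂)) * (d : ℂ)) *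
        fE χ₁ χ₂ z
      = ∑' q : {x : ℕ // x ∈ n.divisors} × ℕ+ × ℕ+, GG χ₁ χ₂ n z q := by
    rw [Finset.sum_mul, ← Finset.sum_coe_sort n.divisors]
    calc ∑ dd : {x : ℕ // x ∈ n.divisors},
        (χ₁ ((n / dd.1 : ℕ) : ZMod q₁) * (starRingEnd ℂ) (χ₂ ((dd.1 : ℕ) : ZMod q₂))
          * ((dd.1 : ℕ) : ℂ)) * fE χ₁ χ₂ z
        = ∑ dd : {x : ℕ // x ∈ n.divisors}, ∑' p : ℕ+ × ℕ+, GG χ₁ χ₂ n z (dd, p) := by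
          apply Finset.sum_congr rfl
          intro dd _
          rw [fE_eq_tsum χ₁ χ₂ z hz, ← tsum_mul_left]
          rfl
      _ = ∑' dd : {x : ℕ // x ∈ n.divisors}, ∑' p : ℕ+ × ℕ+, GG χ₁ χ₂ n z (dd, p) :=
          (tsum_fintype _).symm
      _ = ∑' q : {x : ℕ // x ∈ n.divisors} × ℕ+ × ℕ+, GG χ₁ χ₂ n z q :=
          (Summable.tsum_prod' hGGs hGGs.prod_factor).symm
  rw [hL, hR]
  refine tsum_eq_tsum_of_ne_zero_bij (fun x => PhiH n x.1) ?_ ?_ ?_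
  · intro x y h
    exact Subtype.ext (phiH_inj n h)
  · intro q hq
    have hdvd : (q.1.1 : ℕ) ∣ (q.2.2 : ℕ) * (q.2.1 : ℕ) := by
      by_contra hc
      apply hq
      simp [FF, hc]
    obtain ⟨j, hj⟩ := phiH_surj n q hdvd
    have hjsupp : GG χ₁ χ₂ n z j ≠ 0 := by
      rw [← FF_phi χ₁ χ₂ n z j, hj]
      exact hq
    exact ⟨⟨j, hjsupp⟩, hj⟩
  · exact fun x => FF_phi χ₁ χ₂ n z x.1
end

section
/- Let χ be a primitive Dirichlet character of conductor q > 1 and let x be a real number. Then the symmetric partial sums ∑_{1 ≤ |l| ≤ N} (χ(l)/l) · e(l·x/q) converge as N → ∞, and the limit equals −(2πi/τ(conj(χ))) · ∑_{n=1}^{q−1} conj(χ)(n) · B₁((x+n)/q), where e(w) = exp(2πiw). -/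
open Complex

namespace SymmSumAux

open Filter Finset
open scoped Real

lemma lemA {z : ℂ} (hz1 : ‖z‖ = 1) (hz : z ≠ 1) :
    Tendsto (fun N : ℕ => ∑ l ∈ range N, z ^ l / l) atTop (nhds (-Complex.log (1 - z))) := by
  have hz0 : (1 : ℂ) - z ≠ 0 := sub_ne_zero.mpr (Ne.symm hz)
  have hz0' : (0:ℝ) < ‖1 - z‖ := norm_pos_iff.mpr hz0
  -- Cauchy via Dirichlet's test
  have hb : ∀ n : ℕ, ‖∑ i ∈ range n, z ^ (i + 1)‖ ≤ 2 / ‖1 - z‖ := by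
    intro n
    have h1 : ∑ i ∈ range n, z ^ (i + 1) = z * ((z ^ n - 1) / (z - 1)) := by
      rw [← geom_sum_eq hz, Finset.mul_sum]
      exact Finset.sum_congr rfl fun i _ => by ring
    rw [h1, norm_mul, hz1, one_mul, norm_div, show z - 1 = -(1 - z) by ring, norm_neg]
    gcongr
    calc ‖z ^ n - 1‖ ≤ ‖z ^ n‖ + ‖(1:ℂ)‖ := norm_sub_le _ _
    _ = 2 := by rw [norm_pow, hz1]; norm_num
  have hanti : Antitone (fun i : ℕ => ((i:ℝ) + 1)⁻¹) := by
    intro a b hab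
    apply inv_anti₀ (by positivity) (by exact_mod_cast by linarith)
  have h0 : Tendsto (fun i : ℕ => ((i:ℝ) + 1)⁻¹) atTop (nhds 0) :=
    tendsto_one_div_add_atTop_nhds_zero_nat.congr (fun n => by rw [one_div])
  have hcau : CauchySeq fun n : ℕ => ∑ i ∈ range n, ((i:ℝ)+1)⁻¹ • z ^ (i+1) :=
    hanti.cauchySeq_series_mul_of_tendsto_zero_of_bounded h0 hb
  obtain ⟨L, hL⟩ := cauchySeq_tendsto_of_complete hcau
  -- identify partial sums
  have hshift : Tendsto (fun N : ℕ => ∑ l ∈ range N, z ^ l / l) atTop (nhds L) := by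
    have h1 : ∀ n : ℕ, ∑ l ∈ range (n+1), z ^ l / l
        = ∑ i ∈ range n, ((i:ℝ)+1)⁻¹ • z ^ (i+1) := by
      intro n
      rw [Finset.sum_range_succ' (fun l => z ^ l / l)]
      have : ∀ i ∈ range n, z ^ (i+1) / (i+1 : ℕ) = ((i:ℝ)+1)⁻¹ • z ^ (i+1) := by
        intro i _
        rw [Complex.real_smul]
        push_cast
        ring
      rw [Finset.sum_congr rfl this]
      simp
    have := hL.comp (tendsto_sub_atTop_nat 1)
    apply this.congr'
    filter_upwards [eventually_ge_atTop 1] with n hn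
    rw [Function.comp_apply, ← h1 (n-1), Nat.sub_add_cancel hn]
  -- Abel's limit theorem identifies L
  have habel := Complex.tendsto_tsum_powerSeries_nhdsWithin_lt
      (f := fun l : ℕ => z ^ l / l) hshift
  rw [tendsto_map'_iff] at habel
  have hre : z.re < 1 := by
    rcases lt_or_eq_of_le (Complex.re_le_norm z) with h | h
    · calc z.re < ‖z‖ := h
      _ = 1 := by rw [hz1]
    · exfalso
      apply hz
      have habs : ‖z‖ = 1 := by rw [hz1]
      have h2 := Complex.sq_norm z
      rw [Complex.normSq_apply, habs] at h2
      have hre1 : z.re = 1 := by rw [h, habs]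
      have him : z.im * z.im = 0 := by nlinarith
      rw [mul_self_eq_zero] at him
      exact Complex.ext (by simpa using hre1) (by simpa using him)
  have hlog : Tendsto (fun r : ℝ => -Complex.log (1 - r * z)) (nhdsWithin 1 (Set.Iio 1))
      (nhds (-Complex.log (1 - z))) := by
    have h3 : Tendsto (fun r : ℝ => (r : ℂ)) (nhdsWithin 1 (Set.Iio 1)) (nhds (1:ℂ)) :=
      (Complex.continuous_ofReal.tendsto 1).mono_left nhdsWithin_le_nhds
    have hc1 : Tendsto (fun r : ℝ => 1 - (r:ℂ) * z) (nhdsWithin 1 (Set.Iio 1))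
        (nhds (1 - z)) := by
      have := (tendsto_const_nhds (x := (1:ℂ)) (f := nhdsWithin (1:ℝ) (Set.Iio 1))).sub
        (h3.mul_const z)
      simpa using this
    have hl : ContinuousAt Complex.log (1 - z) := by
      apply continuousAt_clog
      rw [Complex.mem_slitPlane_iff]
      left
      simpa [Complex.sub_re] using hre
    exact (hl.tendsto.comp hc1).neg
  have heq : (fun r : ℝ => -Complex.log (1 - r * z))
      =ᶠ[nhdsWithin 1 (Set.Iio 1)] (fun r : ℝ => ∑' l : ℕ, z ^ l / l * (r:ℂ) ^ l) := by
    filter_upwards [Ioo_mem_nhdsLT_of_mem (Set.mem_Ioc.mpr ⟨(by norm_num : (-1:ℝ) < 1), le_refl (1:ℝ)⟩)] with r hr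
    have hrz : ‖(r:ℂ) * z‖ < 1 := by
      rw [norm_mul, hz1, mul_one, Complex.norm_real, Real.norm_eq_abs]
      exact abs_lt.mpr ⟨hr.1, hr.2⟩
    have hs := Complex.hasSum_taylorSeries_neg_log hrz
    have hs2 : HasSum (fun l : ℕ => z ^ l / l * (r:ℂ) ^ l) (-Complex.log (1 - r * z)) := by
      refine HasSum.congr_fun hs (fun l => ?_)
      rw [mul_pow]
      ring
    exact hs2.tsum_eq.symm
  have hLeq : L = -Complex.log (1 - z) := by
    refine tendsto_nhds_unique habel (hlog.congr' heq)
  rwa [hLeq] at hshift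
lemma lemC {θ : ℝ} (h1 : 0 < θ) (h2 : θ < 2 * π) :
    Complex.log (1 - Complex.exp (θ * I)) =
      (Real.log (2 * Real.sin (θ / 2)) : ℂ) + ((θ / 2 - π / 2 : ℝ) : ℂ) * I := by
  have hπ := Real.pi_pos
  have hs : 0 < Real.sin (θ / 2) :=
    Real.sin_pos_of_pos_of_lt_pi (by linarith) (by linarith)
  have hr : (0:ℝ) < 2 * Real.sin (θ / 2) := by linarith
  have key : (1 : ℂ) - Complex.exp (θ * I)
      = Complex.exp ((Real.log (2 * Real.sin (θ / 2)) : ℂ) + ((θ / 2 - π / 2 : ℝ) : ℂ) * I) := by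
    rw [Complex.exp_add, ← Complex.ofReal_exp, Real.exp_log hr]
    rw [Complex.exp_mul_I, Complex.exp_mul_I]
    rw [show ((θ:ℂ)) = ((θ:ℝ):ℂ) by norm_cast]
    rw [← Complex.ofReal_cos, ← Complex.ofReal_sin, ← Complex.ofReal_cos, ← Complex.ofReal_sin]
    have hc : Real.cos (θ / 2 - π / 2) = Real.sin (θ / 2) := Real.cos_sub_pi_div_two _
    have hsn : Real.sin (θ / 2 - π / 2) = -Real.cos (θ / 2) := Real.sin_sub_pi_div_two _
    have hcos : Real.cos θ = 1 - 2 * Real.sin (θ / 2) ^ 2 := by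
      have ha := Real.sin_sq_add_cos_sq (θ / 2)
      have hb := Real.cos_two_mul (θ / 2)
      rw [show 2 * (θ/2) = θ by ring] at hb
      linarith
    have hsin : Real.sin θ = 2 * Real.sin (θ / 2) * Real.cos (θ / 2) := by
      have := Real.sin_two_mul (θ / 2)
      rw [show 2 * (θ/2) = θ by ring] at this
      linarith
    rw [hc, hsn, hcos, hsin]
    push_cast
    ring
  rw [key, Complex.log_exp]
  · simp only [Complex.add_im, Complex.ofReal_im, Complex.mul_im, Complex.ofReal_re,
      Complex.I_im, Complex.I_re, Complex.ofReal_im]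
    simp
    linarith
  · simp only [Complex.add_im, Complex.ofReal_im, Complex.mul_im, Complex.ofReal_re,
      Complex.I_im, Complex.I_re, Complex.ofReal_im]
    simp
    linarith
lemma zne {a : ℝ} (h0 : 0 < a) (h1 : a < 1) : Complex.exp ((2 * π * a : ℝ) * I) ≠ 1 := by
  intro h
  rw [Complex.exp_eq_one_iff] at h
  obtain ⟨n, hn⟩ := h
  have him := congrArg Complex.im hn
  simp [Complex.mul_im] at him
  have hπ := Real.pi_pos
  have h2 : a = n := by
    have h2π : (2*π) ≠ 0 := by positivity
    nlinarith [him]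
  have hn0 : (0:ℝ) < n := by linarith
  have hn1 : (n:ℝ) < 1 := by linarith
  have : (0:ℤ) < n := by exact_mod_cast hn0
  have : n < 1 := by exact_mod_cast hn1
  omega
lemma lemB (y : ℝ) :
    Tendsto (fun N : ℕ => ∑ l ∈ Finset.Icc 1 N,
        (eC ((l : ℂ) * (y : ℝ)) - eC (-((l : ℂ) * (y : ℝ)))) / (l : ℂ))
      atTop (nhds (-(2 * π * I) * ((B1 y : ℝ) : ℂ))) := by
  have hπ := Real.pi_pos
  by_cases hy : Int.fract y = 0
  · -- integer case: all terms vanish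
    have hy' : y = (⌊y⌋ : ℝ) := by
      have h := hy
      rw [Int.fract] at h
      linarith
    have hzero : ∀ l : ℕ, eC ((l : ℂ) * (y : ℝ)) = 1 := by
      intro l
      rw [eC, hy']
      rw [show 2 * (π:ℂ) * I * ((l:ℂ) * ((⌊y⌋:ℝ):ℂ)) = ((l * ⌊y⌋ : ℤ) : ℂ) * (2 * π * I) by
        push_cast; ring]
      exact Complex.exp_int_mul_two_pi_mul_I _
    have hzero' : ∀ l : ℕ, eC (-((l : ℂ) * (y : ℝ))) = 1 := by
      intro l
      rw [eC, hy']
      rw [show 2 * (π:ℂ) * I * -((l:ℂ) * ((⌊y⌋:ℝ):ℂ)) = ((-(l * ⌊y⌋) : ℤ) : ℂ) * (2 * π * I) by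
        push_cast; ring]
      exact Complex.exp_int_mul_two_pi_mul_I _
    have : ∀ N : ℕ, ∑ l ∈ Finset.Icc 1 N,
        (eC ((l : ℂ) * (y : ℝ)) - eC (-((l : ℂ) * (y : ℝ)))) / (l : ℂ) = 0 := by
      intro N
      apply Finset.sum_eq_zero
      intro l _
      rw [hzero l, hzero' l, sub_self, zero_div]
    rw [B1, if_pos hy]
    simp only [this]
    simpa using tendsto_const_nhds
  · -- generic case
    set t := Int.fract y with hty
    have ht0 : 0 < t := lt_of_le_of_ne (Int.fract_nonneg y) (Ne.symm hy)
    have ht1 : t < 1 := Int.fract_lt_one y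
    set zp := Complex.exp ((2 * π * t : ℝ) * I) with hzp
    set zm := Complex.exp ((2 * π * (1 - t) : ℝ) * I) with hzm
    have hzp1 : ‖zp‖ = 1 := Complex.norm_exp_ofReal_mul_I _
    have hzm1 : ‖zm‖ = 1 := Complex.norm_exp_ofReal_mul_I _
    have hzpne : zp ≠ 1 := zne ht0 ht1
    have hzmne : zm ≠ 1 := zne (by linarith) (by linarith)
    have hfloor : y = t + ⌊y⌋ := by
      rw [hty]
      rw [Int.fract]
      ring
    have hpow : ∀ l : ℕ, eC ((l : ℂ) * (y : ℝ)) = zp ^ l := by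
      intro l
      rw [eC, hzp, ← Complex.exp_nat_mul]
      rw [show 2 * (π:ℂ) * I * ((l:ℂ) * (y:ℝ))
          = (l:ℂ) * (((2 * π * t : ℝ):ℂ) * I) + ((l * ⌊y⌋ : ℤ):ℂ) * (2 * π * I) by
        rw [show ((y:ℝ):ℂ) = ((t:ℝ):ℂ) + ((⌊y⌋:ℤ):ℂ) by
          rw [← Complex.ofReal_intCast, ← Complex.ofReal_add, ← hfloor]
        ]
        push_cast
        ring]
      rw [Complex.exp_add, Complex.exp_int_mul_two_pi_mul_I, mul_one]
    have hpow' : ∀ l : ℕ, eC (-((l : ℂ) * (y : ℝ))) = zm ^ l := by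
      intro l
      rw [eC, hzm, ← Complex.exp_nat_mul]
      rw [show 2 * (π:ℂ) * I * -((l:ℂ) * (y:ℝ))
          = (l:ℂ) * (((2 * π * (1 - t) : ℝ):ℂ) * I) + ((l * (-⌊y⌋ - 1) : ℤ):ℂ) * (2 * π * I) by
        rw [show ((y:ℝ):ℂ) = ((t:ℝ):ℂ) + ((⌊y⌋:ℤ):ℂ) by
          rw [← Complex.ofReal_intCast, ← Complex.ofReal_add, ← hfloor]
        ]
        push_cast
        ring]
      rw [Complex.exp_add, Complex.exp_int_mul_two_pi_mul_I, mul_one]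
    have hcomb : Tendsto (fun N : ℕ => ∑ l ∈ range N, (zp ^ l - zm ^ l) / l) atTop
        (nhds (-Complex.log (1 - zp) + Complex.log (1 - zm))) := by
      have h := (lemA hzp1 hzpne).sub (lemA hzm1 hzmne)
      rw [sub_neg_eq_add] at h
      refine h.congr fun N => ?_
      rw [← Finset.sum_sub_distrib]
      exact Finset.sum_congr rfl fun l _ => (sub_div _ _ _).symm
    have hIcc : ∀ N : ℕ, ∑ l ∈ range (N+1), (zp ^ l - zm ^ l) / l
        = ∑ l ∈ Finset.Icc 1 N,
          (eC ((l : ℂ) * (y : ℝ)) - eC (-((l : ℂ) * (y : ℝ)))) / (l : ℂ) := by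
      intro N
      have hins : range (N+1) = insert 0 (Finset.Icc 1 N) := by
        ext a
        simp only [Finset.mem_range, Finset.mem_insert, Finset.mem_Icc]
        omega
      rw [hins, Finset.sum_insert (by simp)]
      simp only [pow_zero, sub_self, zero_div, zero_add]
      exact Finset.sum_congr rfl fun l _ => by rw [hpow l, hpow' l]
    have hval : -Complex.log (1 - zp) + Complex.log (1 - zm)
        = -(2 * π * I) * ((B1 y : ℝ) : ℂ) := by
      have hp := lemC (θ := 2 * π * t) (by positivity) (by nlinarith)
      have hm := lemC (θ := 2 * π * (1 - t)) (by nlinarith) (by nlinarith)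
      rw [show 2 * π * (1 - t) / 2 = π - 2 * π * t / 2 by ring, Real.sin_pi_sub] at hm
      rw [← hzp] at hp
      rw [← hzm] at hm
      rw [hp, hm, B1, if_neg hy, ← hty]
      push_cast
      ring
    have final := hcomb.comp (tendsto_add_atTop_nat 1)
    rw [hval] at final
    refine final.congr fun N => ?_
    exact hIcc N
lemma star_changeLevel {n m : ℕ} (h : n ∣ m) (ψ : DirichletCharacter ℂ n) :
    star (DirichletCharacter.changeLevel h ψ) = DirichletCharacter.changeLevel h (star ψ) := by
  apply MulChar.ext
  intro a
  rw [MulChar.star_apply, DirichletCharacter.changeLevel_eq_cast_of_dvd _ h a,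
    DirichletCharacter.changeLevel_eq_cast_of_dvd _ h a, MulChar.star_apply]

lemma star_factorsThrough {n : ℕ} {ψ : DirichletCharacter ℂ n} {d : ℕ}
    (h : ψ.FactorsThrough d) : (star ψ).FactorsThrough d := by
  obtain ⟨hd, ψ₀, hψ⟩ := h
  exact ⟨hd, star ψ₀, by rw [hψ, star_changeLevel]⟩

lemma star_isPrimitive {n : ℕ} {ψ : DirichletCharacter ℂ n} (h : ψ.IsPrimitive) :
    (star ψ).IsPrimitive := by
  rw [DirichletCharacter.isPrimitive_def] at h ⊢
  unfold DirichletCharacter.conductor DirichletCharacter.conductorSet at h ⊢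
  have : {d : ℕ | (star ψ).FactorsThrough d} = {d : ℕ | ψ.FactorsThrough d} := by
    ext d
    constructor
    · intro hd
      have := star_factorsThrough hd
      rwa [star_star] at this
    · exact fun hd => star_factorsThrough hd
  rw [this, h]

end SymmSumAux

open SymmSumAux Filter Finset
open scoped Real

theorem symmetric_sum_bernoulli
    {q : ℕ} (hq : 1 < q) (χ : DirichletCharacter ℂ q) (hχ : χ.IsPrimitive) (x : ℝ) :
    Filter.Tendsto
      (fun N : ℕ => ∑ l ∈ Finset.Icc 1 N,
        (χ ((l : ℕ) : ZMod q) / (l : ℂ) * eC ((l : ℂ) * (x : ℂ) / (q : ℂ)) +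
          χ (((-(l : ℤ)) : ℤ) : ZMod q) / (-(l : ℂ)) * eC (-(l : ℂ) * (x : ℂ) / (q : ℂ))))
      Filter.atTop
      (nhds (-(2 * Real.pi * Complex.I / gaussSum' (χ.ringHomComp (starRingEnd ℂ))) *
        ∑ n ∈ Finset.Ico 1 q,
          (starRingEnd ℂ) (χ ((n : ℕ) : ZMod q)) * (B1 ((x + n) / (q : ℝ)) : ℂ))) := by
  haveI : NeZero q := ⟨by omega⟩
  haveI : Fact (1 < q) := ⟨hq⟩
  set χs : DirichletCharacter ℂ q := χ.ringHomComp (starRingEnd ℂ) with hχs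
  have hstar : star χ = χs := rfl
  have hχs_prim : χs.IsPrimitive := by rw [← hstar]; exact star_isPrimitive hχ
  -- conversion between sums over `ZMod q` and over `range q`
  have sum_zmod : ∀ f : ZMod q → ℂ, ∑ t : ZMod q, f t = ∑ n ∈ Finset.range q, f (n : ZMod q) := by
    intro f
    refine Finset.sum_nbij' (fun (t : ZMod q) => t.val) (fun n => (n : ZMod q)) ?_ ?_ ?_ ?_ ?_
    · intro a _
      exact Finset.mem_range.mpr (ZMod.val_lt a)
    · intro b _
      exact Finset.mem_univ _
    · intro a _
      exact ZMod.natCast_rightInverse a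
    · intro b hb
      exact ZMod.val_cast_of_lt (Finset.mem_range.mp hb)
    · intro a _
      exact congrArg f (ZMod.natCast_rightInverse a).symm
  -- the Gauss sum in the statement is the mathlib Gauss sum
  have hτeq : gaussSum' χs = gaussSum χs ZMod.stdAddChar := by
    rw [gaussSum, sum_zmod]
    refine Finset.sum_congr rfl fun n hn => ?_
    congr 1
    rw [show ((n : ℕ) : ZMod q) = ((n : ℤ) : ZMod q) by push_cast; rfl, ZMod.stdAddChar_coe, eC]
    congr 1
    push_cast
    ring
  set τ : ℂ := gaussSum' χs with hτdef
  -- nonvanishing of the Gauss sum, via injectivity of the discrete Fourier transform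
  have hτ : τ ≠ 0 := by
    intro h0
    rw [hτeq] at h0
    have h1 : ZMod.dft (⇑χs) = ZMod.dft (0 : ZMod q → ℂ) := by
      rw [map_zero]
      funext k
      rw [DirichletCharacter.IsPrimitive.fourierTransform_eq_inv_mul_gaussSum hχs_prim,
        h0, mul_zero]
      rfl
    have h2 : (⇑χs) = 0 := ZMod.dft.injective h1
    have h3 : χs 1 = 0 := by rw [h2]; rfl
    rw [MulChar.map_one] at h3
    exact one_ne_zero h3
  -- Fourier inversion for χ
  have key : ∀ a : ZMod q, χ a * τ = ∑ t : ZMod q, χs t * ZMod.stdAddChar (a * t) := by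
    intro a
    have h1 := gaussSum_mulShift_of_isPrimitive ZMod.stdAddChar hχs_prim a
    have h2 : (χs)⁻¹ = χ := by rw [← MulChar.star_eq_inv, ← hstar, star_star]
    rw [h2, ← hτeq] at h1
    rw [← h1, gaussSum]
    simp [AddChar.mulShift_apply]
  have key' : ∀ m : ℤ, χ ((m : ZMod q)) * τ
      = ∑ n ∈ Finset.range q, χs ((n : ℕ) : ZMod q) * eC (((m * n : ℤ) : ℂ) / (q : ℂ)) := by
    intro m
    rw [key ((m : ZMod q)), sum_zmod]
    refine Finset.sum_congr rfl fun n hn => ?_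
    congr 1
    rw [show ((m : ZMod q)) * ((n:ℕ) : ZMod q) = ((m * n : ℤ) : ZMod q) by push_cast; ring,
      ZMod.stdAddChar_coe, eC]
    congr 1
    push_cast
    ring
  -- rewrite partial sums
  have hstep : ∀ N : ℕ, ∑ l ∈ Finset.Icc 1 N,
        (χ ((l : ℕ) : ZMod q) / (l : ℂ) * eC ((l : ℂ) * (x : ℂ) / (q : ℂ)) +
          χ (((-(l : ℤ)) : ℤ) : ZMod q) / (-(l : ℂ)) * eC (-(l : ℂ) * (x : ℂ) / (q : ℂ)))
      = τ⁻¹ * ∑ n ∈ Finset.range q, χs ((n : ℕ) : ZMod q) *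
          ∑ l ∈ Finset.Icc 1 N,
            (eC ((l : ℂ) * (((x + n) / (q : ℝ) : ℝ) : ℂ))
              - eC (-((l : ℂ) * (((x + n) / (q : ℝ) : ℝ) : ℂ)))) / (l : ℂ) := by
    intro N
    conv_rhs => rw [Finset.mul_sum]
    simp only [Finset.mul_sum]
    rw [Finset.sum_comm]
    refine Finset.sum_congr rfl fun l hl => ?_
    have hcastl : ((l : ℕ) : ZMod q) = (((l : ℤ)) : ZMod q) := by push_cast; rfl
    have h1 : χ ((l : ℕ) : ZMod q)
        = τ⁻¹ * ∑ n ∈ Finset.range q, χs ((n : ℕ) : ZMod q) * eC ((((l : ℤ) * n : ℤ) : ℂ) / q) := by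
      rw [← key' (l : ℤ), ← hcastl]
      field_simp
    have h2 : χ (((-(l : ℤ)) : ℤ) : ZMod q)
        = τ⁻¹ * ∑ n ∈ Finset.range q, χs ((n : ℕ) : ZMod q) *
            eC ((((-(l:ℤ)) * n : ℤ) : ℂ) / q) := by
      rw [← key' (-(l : ℤ))]
      field_simp
    rw [h1, h2, Finset.mul_sum, Finset.mul_sum, Finset.sum_div, Finset.sum_div,
      Finset.sum_mul, Finset.sum_mul, ← Finset.sum_add_distrib]
    refine Finset.sum_congr rfl fun n hn => ?_
    have e1 : eC ((((l : ℤ) * n : ℤ) : ℂ) / q) * eC ((l : ℂ) * (x : ℂ) / (q : ℂ))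
        = eC ((l : ℂ) * (((x + n) / (q : ℝ) : ℝ) : ℂ)) := by
      rw [eC, eC, eC, ← Complex.exp_add]
      congr 1
      push_cast
      ring
    have e2 : eC ((((-(l:ℤ)) * n : ℤ) : ℂ) / q) * eC (-(l : ℂ) * (x : ℂ) / (q : ℂ))
        = eC (-((l : ℂ) * (((x + n) / (q : ℝ) : ℝ) : ℂ))) := by
      rw [eC, eC, eC, ← Complex.exp_add]
      congr 1
      push_cast
      ring
    rw [← e1, ← e2]
    field_simp
    ring
  -- take the limit
  have htend : Tendsto (fun N : ℕ => τ⁻¹ * ∑ n ∈ Finset.range q, χs ((n : ℕ) : ZMod q) *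
          ∑ l ∈ Finset.Icc 1 N,
            (eC ((l : ℂ) * (((x + n) / (q : ℝ) : ℝ) : ℂ))
              - eC (-((l : ℂ) * (((x + n) / (q : ℝ) : ℝ) : ℂ)))) / (l : ℂ))
      atTop (nhds (τ⁻¹ * ∑ n ∈ Finset.range q, χs ((n : ℕ) : ZMod q) *
        (-(2 * π * I) * ((B1 ((x + n) / (q : ℝ)) : ℝ) : ℂ)))) := by
    apply Tendsto.const_mul
    apply tendsto_finset_sum
    intro n _
    exact (lemB ((x + n) / (q : ℝ))).const_mul _
  -- identify the limit value
  have hval : τ⁻¹ * ∑ n ∈ Finset.range q, χs ((n : ℕ) : ZMod q) *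
        (-(2 * π * I) * ((B1 ((x + n) / (q : ℝ)) : ℝ) : ℂ))
      = -(2 * Real.pi * Complex.I / τ) *
        ∑ n ∈ Finset.Ico 1 q, (starRingEnd ℂ) (χ ((n : ℕ) : ZMod q)) *
          (B1 ((x + n) / (q : ℝ)) : ℂ) := by
    rw [Finset.range_eq_Ico, Finset.sum_eq_sum_Ico_succ_bot (by omega : 0 < q)]
    have h0 : χs ((0 : ℕ) : ZMod q) = 0 := by
      rw [Nat.cast_zero]
      apply MulChar.map_nonunit
      rw [isUnit_zero_iff]
      exact zero_ne_one
    rw [h0, zero_mul, zero_add, Finset.mul_sum, Finset.mul_sum]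
    refine Finset.sum_congr rfl fun n hn => ?_
    rw [show χs ((n : ℕ) : ZMod q) = (starRingEnd ℂ) (χ ((n : ℕ) : ZMod q)) from rfl]
    rw [div_eq_mul_inv]
    ring
  rw [← hval]
  exact htend.congr fun N => (hstep N).symm
end
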